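/- Let d ≥ 2 and 1 ≤ r_1 ≤ … ≤ r_d, and set H = K^d_{r_1,…,r_d}. Then wsat(K^d(n;d), H) ≤ d! · wsat(n, H) + O(n^{d−2}) as n → ∞. In particular, if G ⊆ K^d_{[n]} is weakly H-saturated in the complete d-graph K^d_{[n]}, then the d-partite lift G^{mult} = G × K^d_{[d]} is weakly H-saturated in K^d_{[n]} × K^d_{[d]}. -/

import Mathlib

open Finset

/-- `G` contains an isomorphic copy of the `q`-graph `H` which contains the edge `e`. -/
def edgeCopyAt {α β : Type*} [DecidableEq α] [DecidableEq β]
    (G : Finset (Finset α)) (H : Finset (Finset β)) (e : Finset α) : Prop :=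
  ∃ φ : β ↪ α, (∀ h ∈ H, h.image φ ∈ G) ∧ ∃ h ∈ H, h.image φ = e

/-- `G` is weakly `H`-saturated in `F`. -/
def WeaklySat {α β : Type*} [DecidableEq α] [DecidableEq β]
    (F G : Finset (Finset α)) (H : Finset (Finset β)) : Prop :=
  G ⊆ F ∧ ∃ L : List (Finset α), L.Nodup ∧ L.toFinset = F \ G ∧
    ∀ i : Fin L.length, edgeCopyAt (G ∪ (L.take (i.1 + 1)).toFinset) H (L.get i)

/-- The weak saturation number `wsat(F, H)`. -/
noncomputable def wsat {α β : Type*} [DecidableEq α] [DecidableEq β]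
    (F : Finset (Finset α)) (H : Finset (Finset β)) : ℕ :=
  sInf {m | ∃ G, WeaklySat F G H ∧ G.card = m}

/-- The complete `q`-graph on `n` vertices. -/
def completeQ (q n : ℕ) : Finset (Finset (Fin n)) := Finset.univ.powersetCard q

/-- The complete `d`-partite `q`-graph on `[n] × [d]` whose parts are the `[n] × {i}`. -/
def multiProd (n d q : ℕ) : Finset (Finset (Fin n × Fin d)) :=
  (Finset.univ.powersetCard q).filter fun e => ∀ i : Fin d, (e.filter fun v => v.2 = i).card ≤ 1

/-- The complete `d`-partite `q`-graph `K^q_{r_1,…,r_d}` with parts of sizes `r 1, …, r d`. -/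
def multiSigma (d q : ℕ) (r : Fin d → ℕ) : Finset (Finset (Σ i : Fin d, Fin (r i))) :=
  (Finset.univ.powersetCard q).filter fun e => ∀ i : Fin d, (e.filter fun v => v.1 = i).card ≤ 1

/-- The tensor product of two `q`-graphs. -/
def tensorG {α β : Type*} [DecidableEq α] [DecidableEq β]
    (G : Finset (Finset α)) (J : Finset (Finset β)) : Finset (Finset (α × β)) :=
  ((G.sup id ×ˢ J.sup id).powerset).filter fun e =>
    e.image Prod.fst ∈ G ∧ e.image Prod.snd ∈ J ∧
      (e.image Prod.fst).card = e.card ∧ (e.image Prod.snd).card = e.card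

section Basic
variable {n d : ℕ}

/-- The multipartite edge determined by a transversal function. -/
def edgeOf (x : Fin d → Fin n) : Finset (Fin n × Fin d) :=
  Finset.univ.image fun i => (x i, i)

lemma mem_edgeOf {x : Fin d → Fin n} {v : Fin n × Fin d} :
    v ∈ edgeOf x ↔ v.1 = x v.2 := by
  constructor
  · intro h
    simp only [edgeOf, mem_image, mem_univ, true_and] at h
    obtain ⟨i, rfl⟩ := h; rfl
  · intro h
    simp only [edgeOf, mem_image, mem_univ, true_and]
    exact ⟨v.2, Prod.ext h.symm rfl⟩

lemma edgeOf_injective : Function.Injective (edgeOf (n := n) (d := d)) := by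
  intro x y hxy
  funext i
  have : (x i, i) ∈ edgeOf y := hxy ▸ mem_edgeOf.2 rfl
  exact mem_edgeOf.1 this

lemma card_edgeOf (x : Fin d → Fin n) : (edgeOf x).card = d := by
  rw [edgeOf, Finset.card_image_of_injective _ (fun a b hab => (Prod.ext_iff.1 hab).2),
    card_univ, Fintype.card_fin]

lemma imageFst_edgeOf (x : Fin d → Fin n) :
    (edgeOf x).image Prod.fst = Finset.univ.image x := by
  rw [edgeOf, Finset.image_image]; rfl

lemma exists_section {α : Type*} [DecidableEq α] {d : ℕ} (π : α → Fin d) (e : Finset α)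
    (hcard : e.card = d) (h1 : ∀ i, (e.filter fun v => π v = i).card ≤ 1) :
    ∃ x : Fin d → α, (∀ i, π (x i) = i) ∧ e = Finset.univ.image x := by
  have hsum : e.card = ∑ i : Fin d, (e.filter fun v => π v = i).card :=
    Finset.card_eq_sum_card_fiberwise (fun v _ => Finset.mem_univ (π v))
  have hsum2 : ∑ i : Fin d, (e.filter fun v => π v = i).card = ∑ _i : Fin d, 1 := by
    rw [← hsum, Finset.sum_const, card_univ, Fintype.card_fin, smul_eq_mul, mul_one, hcard]
  have hone : ∀ i : Fin d, (e.filter fun v => π v = i).card = 1 := fun i =>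
    (Finset.sum_eq_sum_iff_of_le (fun i _ => h1 i)).1 hsum2 i (Finset.mem_univ i)
  choose x' hx' using fun i => Finset.card_eq_one.1 (hone i)
  refine ⟨x', fun i => ?_, ?_⟩
  · have : x' i ∈ e.filter fun v => π v = i := (hx' i) ▸ Finset.mem_singleton_self _
    exact (Finset.mem_filter.1 this).2
  · ext v
    simp only [Finset.mem_image, Finset.mem_univ, true_and]
    constructor
    · intro hv
      refine ⟨π v, ?_⟩
      have hm : v ∈ e.filter fun w => π w = π v := Finset.mem_filter.2 ⟨hv, rfl⟩
      rw [hx' (π v)] at hm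
      exact (Finset.mem_singleton.1 hm).symm
    · rintro ⟨i, rfl⟩
      have : x' i ∈ e.filter fun v => π v = i := (hx' i) ▸ Finset.mem_singleton_self _
      exact (Finset.mem_filter.1 this).1

lemma edgeOf_mem_multiProd (x : Fin d → Fin n) : edgeOf x ∈ multiProd n d d := by
  rw [multiProd, Finset.mem_filter]
  refine ⟨Finset.mem_powersetCard_univ.2 (card_edgeOf x), fun i => ?_⟩
  rw [Finset.card_le_one]
  intro a ha b hb
  obtain ⟨ha1, ha2⟩ := Finset.mem_filter.1 ha
  obtain ⟨hb1, hb2⟩ := Finset.mem_filter.1 hb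
  have ha3 := mem_edgeOf.1 ha1
  have hb3 := mem_edgeOf.1 hb1
  exact Prod.ext (by rw [ha3, hb3, ha2, hb2]) (by rw [ha2, hb2])

lemma mem_multiProd_iff {f : Finset (Fin n × Fin d)} :
    f ∈ multiProd n d d ↔ ∃ x, f = edgeOf x := by
  constructor
  · intro hf
    rw [multiProd, Finset.mem_filter, Finset.mem_powersetCard_univ] at hf
    obtain ⟨z, hz1, hz2⟩ := exists_section Prod.snd f hf.1 hf.2
    refine ⟨fun i => (z i).1, ?_⟩
    rw [hz2, edgeOf]
    congr 1
    funext i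
    exact Prod.ext rfl (hz1 i)
  · rintro ⟨x, rfl⟩; exact edgeOf_mem_multiProd x

lemma mem_multiSigma_iff {r : Fin d → ℕ} {h : Finset (Σ i : Fin d, Fin (r i))} :
    h ∈ multiSigma d d r ↔
      ∃ z : Fin d → Σ i : Fin d, Fin (r i), (∀ i, (z i).1 = i) ∧ h = Finset.univ.image z := by
  constructor
  · intro hh
    rw [multiSigma, Finset.mem_filter, Finset.mem_powersetCard_univ] at hh
    exact exists_section Sigma.fst h hh.1 hh.2
  · rintro ⟨z, hz1, rfl⟩
    rw [multiSigma, Finset.mem_filter, Finset.mem_powersetCard_univ]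
    have hzinj : Function.Injective z := fun a b hab => by
      have := congrArg Sigma.fst hab
      rwa [hz1 a, hz1 b] at this
    refine ⟨by rw [Finset.card_image_of_injective _ hzinj, card_univ, Fintype.card_fin],
      fun i => ?_⟩
    rw [Finset.card_le_one]
    intro a ha b hb
    obtain ⟨ha1, ha2⟩ := Finset.mem_filter.1 ha
    obtain ⟨hb1, hb2⟩ := Finset.mem_filter.1 hb
    simp only [Finset.mem_image, Finset.mem_univ, true_and] at ha1 hb1
    obtain ⟨ia, rfl⟩ := ha1
    obtain ⟨ib, rfl⟩ := hb1
    rw [hz1 ia] at ha2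
    rw [hz1 ib] at hb2
    rw [ha2, hb2]

lemma mem_completeQ {e : Finset (Fin n)} : e ∈ completeQ d n ↔ e.card = d :=
  Finset.mem_powersetCard_univ

lemma completeQ_self : completeQ d d = {Finset.univ} := by
  ext e
  rw [mem_completeQ, Finset.mem_singleton]
  constructor
  · intro h
    exact Finset.eq_univ_of_card e (by rw [h, Fintype.card_fin])
  · rintro rfl
    rw [card_univ, Fintype.card_fin]

end Basic

section Tensor
variable {n d : ℕ}

lemma mem_tensor_iff {G : Finset (Finset (Fin n))} (hG : ∀ e ∈ G, e.card = d)
    {f : Finset (Fin n × Fin d)} :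
    f ∈ tensorG G (completeQ d d) ↔
      ∃ x : Fin d → Fin n, Function.Injective x ∧ Finset.univ.image x ∈ G ∧ f = edgeOf x := by
  rw [tensorG, Finset.mem_filter, Finset.mem_powerset]
  constructor
  · rintro ⟨hsub, h2, h3, h4, h5⟩
    rw [completeQ_self, Finset.mem_singleton] at h3
    have hcf : f.card = d := by
      rw [← h5, h3, card_univ, Fintype.card_fin]
    have hsndinj : Set.InjOn Prod.snd (f : Set (Fin n × Fin d)) := by
      rw [← Finset.card_image_iff]
      rw [h5]
    have hfil : ∀ i : Fin d, (f.filter fun v => v.2 = i).card ≤ 1 := by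
      intro i
      rw [Finset.card_le_one]
      intro a ha b hb
      obtain ⟨ha1, ha2⟩ := Finset.mem_filter.1 ha
      obtain ⟨hb1, hb2⟩ := Finset.mem_filter.1 hb
      exact hsndinj ha1 hb1 (by rw [ha2, hb2])
    obtain ⟨z, hz1, hz2⟩ := exists_section Prod.snd f hcf hfil
    set x : Fin d → Fin n := fun i => (z i).1 with hx
    have hfeq : f = edgeOf x := by
      rw [hz2, edgeOf]
      congr 1
      funext i
      exact Prod.ext rfl (hz1 i)
    have himg : f.image Prod.fst = Finset.univ.image x := by
      rw [hfeq, imageFst_edgeOf]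
    have hxinj : Function.Injective x := by
      have hcardx : (Finset.univ.image x).card = d := by
        rw [← himg, h4, hcf]
      rw [show Function.Injective x ↔ Set.InjOn x Set.univ from Set.injOn_univ.symm]
      rw [← Finset.coe_univ, ← Finset.card_image_iff, hcardx, card_univ, Fintype.card_fin]
    exact ⟨x, hxinj, himg ▸ h2, hfeq⟩
  · rintro ⟨x, hxinj, hxG, rfl⟩
    have himg : (edgeOf x).image Prod.fst = Finset.univ.image x := imageFst_edgeOf x
    have hsnd : (edgeOf x).image Prod.snd = Finset.univ := by
      apply Finset.eq_univ_of_forall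
      intro i
      exact Finset.mem_image.2 ⟨(x i, i), mem_edgeOf.2 rfl, rfl⟩
    refine ⟨?_, himg ▸ hxG, ?_, ?_, ?_⟩
    · intro v hv
      rw [mem_edgeOf] at hv
      rw [Finset.mem_product]
      constructor
      · have h1 : (Finset.univ.image x : Finset (Fin n)) ⊆ G.sup id :=
          Finset.le_sup (f := id) hxG
        exact h1 (himg ▸ Finset.mem_image.2 ⟨v, mem_edgeOf.2 hv, rfl⟩)
      · rw [completeQ_self, Finset.sup_singleton]
        exact Finset.mem_univ _
    · rw [hsnd, completeQ_self]
      exact Finset.mem_singleton_self _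
    · rw [himg, card_edgeOf, Finset.card_image_of_injective _ hxinj, card_univ,
        Fintype.card_fin]
    · rw [hsnd, card_edgeOf, card_univ, Fintype.card_fin]

lemma mem_tensor_completeQ_iff {f : Finset (Fin n × Fin d)} :
    f ∈ tensorG (completeQ d n) (completeQ d d) ↔
      ∃ x : Fin d → Fin n, Function.Injective x ∧ f = edgeOf x := by
  rw [mem_tensor_iff (fun e he => mem_completeQ.1 he)]
  constructor
  · rintro ⟨x, h1, _, h3⟩; exact ⟨x, h1, h3⟩
  · rintro ⟨x, h1, h3⟩
    refine ⟨x, h1, mem_completeQ.2 ?_, h3⟩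
    rw [Finset.card_image_of_injective _ h1, card_univ, Fintype.card_fin]

end Tensor

section Rank

lemma edgeCopyAt_mono {α β : Type*} [DecidableEq α] [DecidableEq β]
    {G G' : Finset (Finset α)} {H : Finset (Finset β)} {e : Finset α}
    (hsub : G ⊆ G') (h : edgeCopyAt G H e) : edgeCopyAt G' H e := by
  obtain ⟨φ, h1, h2⟩ := h
  exact ⟨φ, fun h hh => hsub (h1 h hh), h2⟩

lemma pairwise_flatMap_aux {α β : Type*} {R : β → β → Prop} {f : α → List β} :
    ∀ {l : List α}, l.Pairwise (fun a b => ∀ x ∈ f a, ∀ y ∈ f b, R x y) →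
    (∀ a ∈ l, (f a).Pairwise R) → (l.flatMap f).Pairwise R := by
  intro l
  induction l with
  | nil => intro _ _; simp
  | cons a l ih =>
    intro h1 h2
    rw [List.flatMap_cons, List.pairwise_append]
    obtain ⟨ha, h1'⟩ := List.pairwise_cons.1 h1
    refine ⟨h2 a (List.mem_cons_self), ih h1' (fun b hb => h2 b (List.mem_cons_of_mem _ hb)),
      fun x hx y hy => ?_⟩
    obtain ⟨b, hb, hyb⟩ := List.mem_flatMap.1 hy
    exact ha b hb x hx y hyb

lemma weaklySat_of_rank {α β : Type*} [DecidableEq α] [DecidableEq β]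
    (F G : Finset (Finset α)) (H : Finset (Finset β)) (hGF : G ⊆ F) (ρ : Finset α → ℕ)
    (hcopy : ∀ f ∈ F \ G,
      edgeCopyAt ((G ∪ (F \ G).filter fun g => ρ g < ρ f) ∪ {f}) H f) :
    WeaklySat F G H := by
  classical
  set N := ((F \ G).sup ρ) + 1 with hN
  set L : List (Finset α) := (List.range N).flatMap
      (fun k => ((F \ G).filter fun g => ρ g = k).toList) with hL
  have hmemL : ∀ g, g ∈ L ↔ g ∈ F \ G := by
    intro g
    simp only [hL, List.mem_flatMap, List.mem_range, Finset.mem_toList, Finset.mem_filter]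
    constructor
    · rintro ⟨k, _, hg, _⟩; exact hg
    · intro hg; exact ⟨ρ g, Nat.lt_succ_of_le (Finset.le_sup hg), hg, rfl⟩
  have hρblock : ∀ k, ∀ g ∈ ((F \ G).filter fun g => ρ g = k).toList, ρ g = k := by
    intro k g hg
    exact (Finset.mem_filter.1 (Finset.mem_toList.1 hg)).2
  have hnodup : L.Nodup := by
    rw [hL, List.nodup_flatMap]
    refine ⟨fun k _ => Finset.nodup_toList _, ?_⟩
    have := List.pairwise_lt_range (n := N)
    refine this.imp ?_
    intro a b hab g hga hgb
    have h1 := hρblock a g hga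
    have h2 := hρblock b g hgb
    omega
  have hsorted : L.Pairwise (fun a b => ρ a ≤ ρ b) := by
    rw [hL]
    apply pairwise_flatMap_aux
    · refine (List.pairwise_lt_range (n := N)).imp ?_
      intro a b hab x hx y hy
      have h1 := hρblock a x hx
      have h2 := hρblock b y hy
      omega
    · intro a _
      apply List.pairwise_of_forall_mem_list
      intro x hx y hy
      have h1 := hρblock a x hx
      have h2 := hρblock a y hy
      omega
  refine ⟨hGF, L, hnodup, ?_, ?_⟩
  · ext g
    rw [List.mem_toFinset]
    exact hmemL g
  · intro i
    have hfF : L.get i ∈ F \ G := (hmemL _).1 (by exact L.get_mem i)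
    refine edgeCopyAt_mono ?_ (hcopy _ hfF)
    intro g hg
    rcases Finset.mem_union.1 hg with hg | hg
    · rcases Finset.mem_union.1 hg with hg | hg
      · exact Finset.mem_union_left _ hg
      · obtain ⟨hgFG, hglt⟩ := Finset.mem_filter.1 hg
        have hgL : g ∈ L := (hmemL g).2 hgFG
        have hj : L.idxOf g < L.length := List.idxOf_lt_length_iff.2 hgL
        have hget : L.get ⟨L.idxOf g, hj⟩ = g := List.idxOf_get hj
        have hji : L.idxOf g < i.1 + 1 := by
          by_contra hcon
          push_neg at hcon
          have hlt : i.1 < L.idxOf g := by omega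
          have := (List.pairwise_iff_getElem.1 hsorted) i.1 (L.idxOf g) i.isLt hj hlt
          have he1 : L[i.1] = L.get i := rfl
          have he2 : L[L.idxOf g] = g := hget
          rw [he1, he2] at this
          omega
        refine Finset.mem_union_right _ ?_
        rw [List.mem_toFinset]
        refine List.mem_take_iff_getElem.2 ⟨L.idxOf g, ?_, hget⟩
        exact lt_min hji hj
    · have hgf : g = L.get i := Finset.mem_singleton.1 hg
      subst hgf
      refine Finset.mem_union_right _ ?_
      rw [List.mem_toFinset]
      exact List.mem_take_iff_getElem.2 ⟨i.1, lt_min (Nat.lt_succ_self _) i.isLt, rfl⟩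

end Rank

section Copy
variable {n d : ℕ} {r : Fin d → ℕ}

lemma image_univ_comp_equiv {α : Type*} [DecidableEq α] {d : ℕ}
    (g : Fin d → α) (σ : Equiv.Perm (Fin d)) :
    Finset.univ.image (fun k => g (σ k)) = Finset.univ.image g := by
  rw [show (fun k => g (σ k)) = g ∘ σ from rfl, ← Finset.image_image]
  congr 1
  exact Finset.image_univ_equiv σ

lemma lift_copy (hd : 0 < d)
    {G : Finset (Finset (Fin n))} {e : Finset (Fin n)}
    {T : Finset (Finset (Fin n))}
    (hψ : edgeCopyAt (G ∪ T) (multiSigma d d r) e)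
    {x : Fin d → Fin n} (hx : Function.Injective x) (hxe : Finset.univ.image x = e)
    (W : Finset (Finset (Fin n × Fin d)))
    (hWG : ∀ e' ∈ G, ∀ x' : Fin d → Fin n, Function.Injective x' →
      Finset.univ.image x' = e' → edgeOf x' ∈ W)
    (hWT : ∀ e' ∈ T, e' ≠ e → ∀ x' : Fin d → Fin n, Function.Injective x' →
      Finset.univ.image x' = e' → edgeOf x' ∈ W)
    (hWf : edgeOf x ∈ W) :
    edgeCopyAt W (multiSigma d d r) (edgeOf x) := by
  classical
  obtain ⟨ψ, hall, h₀, h₀H, h₀e⟩ := hψ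
  obtain ⟨z₀, hz₀1, hz₀2⟩ := mem_multiSigma_iff.1 h₀H
  haveI : Nonempty (Fin n) := ⟨x ⟨0, hd⟩⟩
  haveI : Nonempty (Fin d) := ⟨⟨0, hd⟩⟩
  set u : Fin d → Fin n := fun i => ψ (z₀ i) with hu
  have huinj : Function.Injective u := by
    intro a b hab
    have : z₀ a = z₀ b := ψ.injective hab
    have := congrArg Sigma.fst this
    rwa [hz₀1 a, hz₀1 b] at this
  have hue : Finset.univ.image u = e := by
    rw [← h₀e, hz₀2, Finset.image_image]
    rfl
  set σ : Fin d → Fin d := fun i => Function.invFun x (u i) with hσ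
  have hxu : ∀ i, x (σ i) = u i := by
    intro i
    apply Function.invFun_eq
    have : u i ∈ Finset.univ.image x := hxe.symm ▸ hue ▸
      Finset.mem_image.2 ⟨i, Finset.mem_univ i, rfl⟩
    obtain ⟨j, _, hj⟩ := Finset.mem_image.1 this
    exact ⟨j, hj⟩
  have hσinj : Function.Injective σ := by
    intro a b hab
    apply huinj
    rw [← hxu a, ← hxu b, hab]
  set σ' : Equiv.Perm (Fin d) := Equiv.ofBijective σ
    ⟨hσinj, Finite.surjective_of_injective hσinj⟩ with hσ'
  have hσ'apply : ∀ i, σ' i = σ i := fun i => rfl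
  set φ : (Σ i : Fin d, Fin (r i)) ↪ Fin n × Fin d :=
    ⟨fun v => (ψ v, σ v.1), by
      intro a b hab
      exact ψ.injective (Prod.ext_iff.1 hab).1⟩ with hφ
  have hφapply : ∀ v, φ v = (ψ v, σ v.1) := fun v => rfl
  -- image of an H-edge under φ
  have key : ∀ (z : Fin d → Σ i : Fin d, Fin (r i)), (∀ i, (z i).1 = i) →
      ∃ y : Fin d → Fin n, Function.Injective y ∧
        Finset.univ.image y = (Finset.univ.image z).image ψ ∧
        (Finset.univ.image z).image φ = edgeOf y := by
    intro z hz1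
    set y : Fin d → Fin n := fun k => ψ (z (σ'.symm k)) with hy
    have hyinj : Function.Injective y := by
      intro a b hab
      have h1 : z (σ'.symm a) = z (σ'.symm b) := ψ.injective hab
      have h2 := congrArg Sigma.fst h1
      rw [hz1, hz1] at h2
      exact σ'.symm.injective h2
    refine ⟨y, hyinj, ?_, ?_⟩
    · rw [hy]
      rw [Finset.image_image]
      exact image_univ_comp_equiv (fun i => ψ (z i)) σ'.symm
    · rw [Finset.image_image, edgeOf]
      have hfun : ((φ : (Σ i : Fin d, Fin (r i)) → Fin n × Fin d) ∘ z) =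
          (fun k => (y k, k)) ∘ σ := by
        funext i
        have h1 : σ'.symm (σ i) = i := by
          rw [← hσ'apply]
          exact σ'.symm_apply_apply i
        show (ψ (z i), σ (z i).1) = (ψ (z (σ'.symm (σ i))), σ i)
        rw [h1, hz1 i]
      rw [hfun]
      rw [show ((fun k => (y k, k)) ∘ σ) = (fun k => (y k, k)) ∘ (σ' : Fin d → Fin d) from rfl,
        ← Finset.image_image]
      congr 1
      exact Finset.image_univ_equiv σ'
  -- the distinguished edge maps onto edgeOf x
  have hmain : ∀ (z : Fin d → Σ i : Fin d, Fin (r i)), (∀ i, (z i).1 = i) →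
      (Finset.univ.image z).image ψ = e → (Finset.univ.image z).image φ = edgeOf x := by
    intro z hz1 hze
    have hψz : ∀ i, ψ (z i) = u i := by
      intro i
      have hmem : ψ (z i) ∈ e := hze ▸
        Finset.mem_image.2 ⟨z i, Finset.mem_image.2 ⟨i, Finset.mem_univ i, rfl⟩, rfl⟩
      rw [← hue] at hmem
      obtain ⟨j, _, hj⟩ := Finset.mem_image.1 hmem
      have h1 : z₀ j = z i := ψ.injective hj
      have h2 := congrArg Sigma.fst h1
      rw [hz₀1 j, hz1 i] at h2
      subst h2
      rw [← hj]
    rw [Finset.image_image]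
    have hfun : ((φ : (Σ i : Fin d, Fin (r i)) → Fin n × Fin d) ∘ z) =
        (fun k => (x k, k)) ∘ σ := by
      funext i
      show (ψ (z i), σ (z i).1) = (x (σ i), σ i)
      rw [hz1 i, hψz i, hxu i]
    rw [hfun, edgeOf]
    rw [show ((fun k => (x k, k)) ∘ σ) = (fun k => (x k, k)) ∘ (σ' : Fin d → Fin d) from rfl,
      ← Finset.image_image]
    congr 1
    exact Finset.image_univ_equiv σ'
  refine ⟨φ, ?_, ?_⟩
  · intro h hH
    obtain ⟨z, hz1, hz2⟩ := mem_multiSigma_iff.1 hH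
    subst hz2
    obtain ⟨y, hyinj, hyimg, hyφ⟩ := key z hz1
    have hmem := hall _ hH
    rcases Finset.mem_union.1 hmem with hmem | hmem
    · rw [hyφ]
      exact hWG _ hmem y hyinj hyimg
    · by_cases hcase : (Finset.univ.image z).image ψ = e
      · rw [hmain z hz1 hcase]
        exact hWf
      · rw [hyφ]
        exact hWT _ hmem hcase y hyinj hyimg
  · refine ⟨h₀, h₀H, ?_⟩
    rw [hz₀2]
    exact hmain z₀ hz₀1 (by rw [← hz₀2, h₀e])

end Copy

section Degen
variable {n d : ℕ} {r : Fin d → ℕ}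

/-- partial sums of `r` as a function on `ℕ`. -/
def rv (r : Fin d → ℕ) : ℕ → ℕ := fun j => if h : j < d then r ⟨j, h⟩ else 0

def Ofs (r : Fin d → ℕ) : ℕ → ℕ := fun k => ∑ j ∈ Finset.range k, rv r j

lemma Ofs_total : Ofs r d = ∑ i, r i := by
  rw [Ofs, ← Fin.sum_univ_eq_sum_range]
  apply Finset.sum_congr rfl
  intro i _
  rw [rv]
  simp [i.isLt]

lemma Ofs_lt {i : Fin d} {a : Fin (r i)} (ha : a.val ≠ 0) :
    Ofs r i.1 + (a.val - 1) < ∑ i, r i := by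
  have h1 : Ofs r i.1 + rv r i.1 = Ofs r (i.1 + 1) := by
    rw [Ofs, Ofs, Finset.sum_range_succ]
  have h2 : Ofs r (i.1 + 1) ≤ Ofs r d := by
    apply Finset.sum_le_sum_of_subset
    intro j hj
    rw [Finset.mem_range] at hj ⊢
    omega
  have h3 : rv r i.1 = r i := by rw [rv]; simp [i.isLt]
  have h4 : a.val < r i := a.isLt
  rw [← Ofs_total]
  omega

lemma degen_copy (hr : ∀ i, 1 ≤ r i)
    {x : Fin d → Fin n} (hninj : ¬ Function.Injective x)
    (hhigh : ∀ i, (∑ i, r i) ≤ (x i : ℕ))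
    (W : Finset (Finset (Fin n × Fin d)))
    (hWnd : ∀ y : Fin d → Fin n, Function.Injective y → edgeOf y ∈ W)
    (hWdg : ∀ y : Fin d → Fin n, ¬ Function.Injective y → (∃ i, (y i : ℕ) < ∑ i, r i) →
      edgeOf y ∈ W)
    (hWf : edgeOf x ∈ W) :
    edgeCopyAt W (multiSigma d d r) (edgeOf x) := by
  classical
  set R := ∑ i, r i with hR
  obtain ⟨a0, b0, hab, hne⟩ := Function.not_injective_iff.1 hninj
  have hRn : R < n := lt_of_le_of_lt (hhigh a0) (x a0).isLt
  have hvlt : ∀ (i : Fin d) (a : Fin (r i)), Ofs r i.1 + (a.val - 1) < n := by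
    intro i a
    by_cases h0 : a.val = 0
    · simp only [h0]
      have := Ofs_lt (r := r) (i := i) (a := ⟨0, hr i⟩)
      have h2 : Ofs r i.1 ≤ Ofs r d := by
        apply Finset.sum_le_sum_of_subset
        intro j hj
        rw [Finset.mem_range] at hj ⊢
        have := i.isLt
        omega
      rw [Ofs_total] at h2
      omega
    · exact lt_trans (Ofs_lt h0) hRn
  set s : (i : Fin d) → Fin (r i) → Fin n := fun i a =>
    if a.val = 0 then x i else ⟨Ofs r i.1 + (a.val - 1), hvlt i a⟩ with hs
  have hs0 : ∀ (i : Fin d) (a : Fin (r i)), a.val = 0 → s i a = x i := by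
    intro i a h; rw [hs]; simp [h]
  have hslow : ∀ (i : Fin d) (a : Fin (r i)), a.val ≠ 0 → (s i a : ℕ) < R := by
    intro i a h
    rw [hs]
    simp only [h, if_false]
    exact Ofs_lt h
  have hsinj : ∀ (i : Fin d), Function.Injective (s i) := by
    intro i a b hab2
    by_cases ha : a.val = 0 <;> by_cases hb : b.val = 0
    · exact Fin.ext (by omega)
    · exfalso
      rw [hs0 i a ha] at hab2
      have h5 := hslow i b hb
      have h6 := hhigh i
      rw [hab2] at h6
      omega
    · exfalso
      rw [hs0 i b hb] at hab2
      have h5 := hslow i a ha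
      have h6 := hhigh i
      rw [← hab2] at h6
      omega
    · rw [hs] at hab2
      simp only [ha, hb, if_false] at hab2
      have := Fin.mk.injEq (Ofs r i.1 + (a.val - 1)) (hvlt i a) (Ofs r i.1 + (b.val - 1)) (hvlt i b) ▸ congrArg Fin.val hab2
      apply Fin.ext
      have hv : Ofs r i.1 + (a.val - 1) = Ofs r i.1 + (b.val - 1) := congrArg Fin.val hab2
      omega
  set φ : (Σ i : Fin d, Fin (r i)) ↪ Fin n × Fin d :=
    ⟨fun v => (s v.1 v.2, v.1), by
      rintro ⟨ia, aa⟩ ⟨ib, ab⟩ hab2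
      obtain ⟨h1, h2⟩ := Prod.ext_iff.1 hab2
      simp only at h1 h2
      subst h2
      have := hsinj ia h1
      rw [this]⟩ with hφ
  have key : ∀ (z : Fin d → Σ i : Fin d, Fin (r i)), (∀ i, (z i).1 = i) →
      ∃ y : Fin d → Fin n, (∀ i, y i = x i ∨ (y i : ℕ) < R) ∧
        (Finset.univ.image z).image φ = edgeOf y ∧
        ((∀ i, (z i).2.val = 0) → y = x) := by
    intro z hz1
    set y : Fin d → Fin n := fun i => s (z i).1 (z i).2 with hy
    have hφz : ∀ i, φ (z i) = (y i, i) := by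
      intro i
      exact Prod.ext rfl (hz1 i)
    refine ⟨y, ?_, ?_, ?_⟩
    · intro i
      by_cases h0 : (z i).2.val = 0
      · left
        rw [hy]
        simp only
        rw [hs0 _ _ h0]
        exact congrArg x (hz1 i)
      · right
        exact hslow _ _ h0
    · rw [Finset.image_image, edgeOf]
      apply Finset.image_congr
      intro i _
      exact hφz i
    · intro hall0
      funext i
      rw [hy]
      simp only
      rw [hs0 _ _ (hall0 i)]
      exact congrArg x (hz1 i)
  refine ⟨φ, ?_, ?_⟩
  · intro h hH
    obtain ⟨z, hz1, rfl⟩ := mem_multiSigma_iff.1 hH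
    obtain ⟨y, hdich, hyφ, _⟩ := key z hz1
    rw [hyφ]
    by_cases hcase : ∀ i, y i = x i
    · have : y = x := funext hcase
      rw [this]
      exact hWf
    · by_cases hyinj : Function.Injective y
      · exact hWnd y hyinj
      · push_neg at hcase
        obtain ⟨i, hi⟩ := hcase
        refine hWdg y hyinj ⟨i, ?_⟩
        rcases hdich i with h | h
        · exact absurd h hi
        · exact h
  · set z0 : Fin d → Σ i : Fin d, Fin (r i) := fun i => ⟨i, ⟨0, hr i⟩⟩ with hz0
    have hz01 : ∀ i, (z0 i).1 = i := fun i => rfl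
    have hmem : Finset.univ.image z0 ∈ multiSigma d d r :=
      mem_multiSigma_iff.2 ⟨z0, hz01, rfl⟩
    obtain ⟨y, _, hyφ, hyx⟩ := key z0 hz01
    refine ⟨Finset.univ.image z0, hmem, ?_⟩
    rw [hyφ, hyx (fun i => rfl)]

end Degen

section Main
variable {d : ℕ} {r : Fin d → ℕ}

lemma indexOf_lt_of_mem_take {α : Type*} [DecidableEq α] {L : List α} (hnd : L.Nodup)
    {e' : α} {m : ℕ} (h : e' ∈ L.take m) : L.idxOf e' < m := by
  obtain ⟨j', hj', hge⟩ := List.mem_take_iff_getElem.1 h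
  have hlen : j' < L.length := lt_of_lt_of_le hj' (min_le_right _ _)
  have heq : L.idxOf e' = j' := by
    rw [← hge]
    exact hnd.idxOf_getElem j' hlen
  omega

lemma indexOf_lt_indexOf {α : Type*} [DecidableEq α] {L : List α} (hnd : L.Nodup)
    {e e' : α} (he : e ∈ L) (h : e' ∈ L.take (L.idxOf e + 1)) (hne : e' ≠ e) :
    L.idxOf e' < L.idxOf e := by
  have h1 := indexOf_lt_of_mem_take hnd h
  have h2 : e' ∈ L := List.take_subset _ _ h
  have h3 : L.idxOf e' ≠ L.idxOf e := by
    intro hcon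
    apply hne
    have g1 : L[L.idxOf e']'(List.idxOf_lt_length_iff.2 h2) = e' := List.getElem_idxOf _
    have g2 : L[L.idxOf e]'(List.idxOf_lt_length_iff.2 he) = e := List.getElem_idxOf _
    rw [← g1, ← g2]
    congr 1
  omega

lemma part2 (hd : 0 < d) {n : ℕ} {G : Finset (Finset (Fin n))}
    (hG : WeaklySat (completeQ d n) G (multiSigma d d r)) :
    WeaklySat (tensorG (completeQ d n) (completeQ d d)) (tensorG G (completeQ d d))
      (multiSigma d d r) := by
  classical
  obtain ⟨hGF, L, hnodupL, hLtf, hLcopy⟩ := hG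
  have hGc : ∀ e ∈ G, e.card = d := fun e he => mem_completeQ.1 (hGF he)
  have hsub : tensorG G (completeQ d d) ⊆ tensorG (completeQ d n) (completeQ d d) := by
    intro f hf
    obtain ⟨x, h1, h2, h3⟩ := (mem_tensor_iff hGc).1 hf
    exact mem_tensor_completeQ_iff.2 ⟨x, h1, h3⟩
  apply weaklySat_of_rank _ _ _ hsub (fun f => L.idxOf (f.image Prod.fst))
  intro f hf
  obtain ⟨hfF, hfG⟩ := Finset.mem_sdiff.1 hf
  obtain ⟨x, hxinj, hxe⟩ := mem_tensor_completeQ_iff.1 hfF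
  subst hxe
  have hρf : (edgeOf x).image Prod.fst = Finset.univ.image x := imageFst_edgeOf x
  have heG : Finset.univ.image x ∉ G := fun hmem =>
    hfG ((mem_tensor_iff hGc).2 ⟨x, hxinj, hmem, rfl⟩)
  have heC : Finset.univ.image x ∈ completeQ d n := mem_completeQ.2
    (by rw [Finset.card_image_of_injective _ hxinj, card_univ, Fintype.card_fin])
  have heL : Finset.univ.image x ∈ L := by
    rw [← List.mem_toFinset, hLtf]
    exact Finset.mem_sdiff.2 ⟨heC, heG⟩
  have hj : L.idxOf (Finset.univ.image x) < L.length := List.idxOf_lt_length_iff.2 heL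
  have hget : L.get ⟨L.idxOf (Finset.univ.image x), hj⟩ = Finset.univ.image x :=
    List.idxOf_get hj
  have hψ := hLcopy ⟨L.idxOf (Finset.univ.image x), hj⟩
  rw [hget] at hψ
  refine lift_copy hd hψ hxinj rfl _ ?_ ?_ ?_
  · intro e' he' x' hx'inj hx'e
    refine Finset.mem_union_left _ (Finset.mem_union_left _ ?_)
    exact (mem_tensor_iff hGc).2 ⟨x', hx'inj, hx'e ▸ he', rfl⟩
  · intro e' he' hne x' hx'inj hx'e
    refine Finset.mem_union_left _ (Finset.mem_union_right _ ?_)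
    have he'L : e' ∈ L.take (L.idxOf (Finset.univ.image x) + 1) := List.mem_toFinset.1 he'
    have he'G : e' ∉ G := by
      have : e' ∈ completeQ d n \ G := by
        rw [← hLtf, List.mem_toFinset]
        exact List.take_subset _ _ he'L
      exact (Finset.mem_sdiff.1 this).2
    refine Finset.mem_filter.2 ⟨Finset.mem_sdiff.2 ⟨?_, ?_⟩, ?_⟩
    · exact mem_tensor_completeQ_iff.2 ⟨x', hx'inj, rfl⟩
    · intro hcon
      obtain ⟨x'', _, hx''G, hfeq⟩ := (mem_tensor_iff hGc).1 hcon
      apply he'G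
      have : (edgeOf x').image Prod.fst = Finset.univ.image x'' := by
        rw [hfeq, imageFst_edgeOf]
      rw [imageFst_edgeOf, hx'e] at this
      rwa [this]
    · simp only [imageFst_edgeOf, hρf]
      rw [hx'e]
      exact indexOf_lt_indexOf hnodupL heL he'L hne
  · exact Finset.mem_union_right _ (Finset.mem_singleton_self _)

lemma part1 (hd : 0 < d) (hr : ∀ i, 1 ≤ r i) {n : ℕ} {G : Finset (Finset (Fin n))}
    (hG : WeaklySat (completeQ d n) G (multiSigma d d r)) :
    WeaklySat (multiProd n d d)
      (tensorG G (completeQ d d) ∪ ((multiProd n d d).filter fun g =>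
        (g.image Prod.fst).card < d ∧ ∃ v ∈ g, (v.1 : ℕ) < ∑ i, r i))
      (multiSigma d d r) := by
  classical
  obtain ⟨hGF, L, hnodupL, hLtf, hLcopy⟩ := hG
  have hGc : ∀ e ∈ G, e.card = d := fun e he => mem_completeQ.1 (hGF he)
  set Z := (multiProd n d d).filter fun g =>
    (g.image Prod.fst).card < d ∧ ∃ v ∈ g, (v.1 : ℕ) < ∑ i, r i with hZ
  set G1 := tensorG G (completeQ d d) ∪ Z with hG1
  have htsub : tensorG G (completeQ d d) ⊆ multiProd n d d := by
    intro f hf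
    obtain ⟨x, h1, h2, h3⟩ := (mem_tensor_iff hGc).1 hf
    rw [h3]
    exact edgeOf_mem_multiProd x
  have hsub : G1 ⊆ multiProd n d d := by
    rw [hG1]
    exact Finset.union_subset htsub (Finset.filter_subset _ _)
  apply weaklySat_of_rank _ _ _ hsub (fun f =>
    if (f.image Prod.fst).card = d then L.idxOf (f.image Prod.fst) else L.length)
  intro f hf
  obtain ⟨hfF, hfG1⟩ := Finset.mem_sdiff.1 hf
  obtain ⟨x, hxe⟩ := mem_multiProd_iff.1 hfF
  subst hxe
  have hfGt : edgeOf x ∉ tensorG G (completeQ d d) := fun h =>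
    hfG1 (Finset.mem_union_left _ h)
  have hfZ : edgeOf x ∉ Z := fun h => hfG1 (Finset.mem_union_right _ h)
  by_cases hxinj : Function.Injective x
  · -- nondegenerate edge: lift of an edge of the complete d-graph
    have hcarde : (Finset.univ.image x).card = d := by
      rw [Finset.card_image_of_injective _ hxinj, card_univ, Fintype.card_fin]
    have hρf : ((edgeOf x).image Prod.fst).card = d := by rw [imageFst_edgeOf]; exact hcarde
    have heG : Finset.univ.image x ∉ G := fun hmem =>
      hfGt ((mem_tensor_iff hGc).2 ⟨x, hxinj, hmem, rfl⟩)
    have heC : Finset.univ.image x ∈ completeQ d n := mem_completeQ.2 hcarde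
    have heL : Finset.univ.image x ∈ L := by
      rw [← List.mem_toFinset, hLtf]
      exact Finset.mem_sdiff.2 ⟨heC, heG⟩
    have hj : L.idxOf (Finset.univ.image x) < L.length := List.idxOf_lt_length_iff.2 heL
    have hget : L.get ⟨L.idxOf (Finset.univ.image x), hj⟩ = Finset.univ.image x :=
      List.idxOf_get hj
    have hψ := hLcopy ⟨L.idxOf (Finset.univ.image x), hj⟩
    rw [hget] at hψ
    refine lift_copy hd hψ hxinj rfl _ ?_ ?_ ?_
    · intro e' he' x' hx'inj hx'e
      refine Finset.mem_union_left _ (Finset.mem_union_left _ ?_)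
      rw [hG1]
      exact Finset.mem_union_left _ ((mem_tensor_iff hGc).2 ⟨x', hx'inj, hx'e ▸ he', rfl⟩)
    · intro e' he' hne x' hx'inj hx'e
      refine Finset.mem_union_left _ (Finset.mem_union_right _ ?_)
      have he'L : e' ∈ L.take (L.idxOf (Finset.univ.image x) + 1) := List.mem_toFinset.1 he'
      have he'G : e' ∉ G := by
        have : e' ∈ completeQ d n \ G := by
          rw [← hLtf, List.mem_toFinset]
          exact List.take_subset _ _ he'L
        exact (Finset.mem_sdiff.1 this).2
      have hcard' : ((edgeOf x').image Prod.fst).card = d := by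
        rw [imageFst_edgeOf, Finset.card_image_of_injective _ hx'inj, card_univ,
          Fintype.card_fin]
      refine Finset.mem_filter.2 ⟨Finset.mem_sdiff.2 ⟨edgeOf_mem_multiProd x', ?_⟩, ?_⟩
      · rw [hG1]
        intro hcon
        rcases Finset.mem_union.1 hcon with hcon | hcon
        · obtain ⟨x'', _, hx''G, hfeq⟩ := (mem_tensor_iff hGc).1 hcon
          apply he'G
          have : (edgeOf x').image Prod.fst = Finset.univ.image x'' := by
            rw [hfeq, imageFst_edgeOf]
          rw [imageFst_edgeOf, hx'e] at this
          rwa [this]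
        · rw [hZ] at hcon
          have := (Finset.mem_filter.1 hcon).2.1
          omega
      · simp only [hρf, hcard', if_pos]
        rw [imageFst_edgeOf, imageFst_edgeOf, hx'e]
        exact indexOf_lt_indexOf hnodupL heL he'L hne
    · exact Finset.mem_union_right _ (Finset.mem_singleton_self _)
  · -- degenerate edge
    have hcardlt : ((edgeOf x).image Prod.fst).card < d := by
      rw [imageFst_edgeOf]
      have hle : (Finset.univ.image x).card ≤ d := le_trans Finset.card_image_le
        (by rw [card_univ, Fintype.card_fin])
      rcases lt_or_eq_of_le hle with h | h
      · exact h
      · exfalso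
        apply hxinj
        rw [show Function.Injective x ↔ Set.InjOn x Set.univ from
          Set.injOn_univ.symm]
        rw [← Finset.coe_univ, ← Finset.card_image_iff, h, card_univ, Fintype.card_fin]
    have hhigh : ∀ i, (∑ i, r i) ≤ (x i : ℕ) := by
      intro i
      by_contra hcon
      push_neg at hcon
      apply hfZ
      rw [hZ]
      exact Finset.mem_filter.2 ⟨edgeOf_mem_multiProd x, hcardlt,
        ⟨(x i, i), mem_edgeOf.2 rfl, hcon⟩⟩
    refine degen_copy hr hxinj hhigh _ ?_ ?_ ?_
    · -- injective copy edges
      intro y hyinj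
      have hcardy : (Finset.univ.image y).card = d := by
        rw [Finset.card_image_of_injective _ hyinj, card_univ, Fintype.card_fin]
      by_cases hyG : Finset.univ.image y ∈ G
      · refine Finset.mem_union_left _ (Finset.mem_union_left _ ?_)
        rw [hG1]
        exact Finset.mem_union_left _ ((mem_tensor_iff hGc).2 ⟨y, hyinj, hyG, rfl⟩)
      · refine Finset.mem_union_left _ (Finset.mem_union_right _ ?_)
        have heL : Finset.univ.image y ∈ L := by
          rw [← List.mem_toFinset, hLtf]
          exact Finset.mem_sdiff.2 ⟨mem_completeQ.2 hcardy, hyG⟩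
        have hcard' : ((edgeOf y).image Prod.fst).card = d := by
          rw [imageFst_edgeOf]; exact hcardy
        refine Finset.mem_filter.2 ⟨Finset.mem_sdiff.2 ⟨edgeOf_mem_multiProd y, ?_⟩, ?_⟩
        · rw [hG1]
          intro hcon
          rcases Finset.mem_union.1 hcon with hcon | hcon
          · obtain ⟨x'', _, hx''G, hfeq⟩ := (mem_tensor_iff hGc).1 hcon
            apply hyG
            have : (edgeOf y).image Prod.fst = Finset.univ.image x'' := by
              rw [hfeq, imageFst_edgeOf]
            rw [imageFst_edgeOf] at this
            rwa [this]
          · rw [hZ] at hcon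
            have := (Finset.mem_filter.1 hcon).2.1
            omega
        · simp only [hcard', if_pos]
          rw [if_neg (by omega)]
          rw [imageFst_edgeOf]
          exact List.idxOf_lt_length_iff.2 heL
    · -- degenerate low copy edges are seeds
      intro y hyninj hylow
      refine Finset.mem_union_left _ (Finset.mem_union_left _ ?_)
      rw [hG1]
      refine Finset.mem_union_right _ ?_
      rw [hZ]
      have hcardy : ((edgeOf y).image Prod.fst).card < d := by
        rw [imageFst_edgeOf]
        have hle : (Finset.univ.image y).card ≤ d := le_trans Finset.card_image_le
          (by rw [card_univ, Fintype.card_fin])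
        rcases lt_or_eq_of_le hle with h | h
        · exact h
        · exfalso
          apply hyninj
          rw [show Function.Injective y ↔ Set.InjOn y Set.univ from
            Set.injOn_univ.symm]
          rw [← Finset.coe_univ, ← Finset.card_image_iff, h, card_univ, Fintype.card_fin]
      obtain ⟨i, hi⟩ := hylow
      exact Finset.mem_filter.2 ⟨edgeOf_mem_multiProd y, hcardy,
        ⟨(y i, i), mem_edgeOf.2 rfl, hi⟩⟩
    · exact Finset.mem_union_right _ (Finset.mem_singleton_self _)

end Main

section Count

lemma weaklySat_self {α β : Type*} [DecidableEq α] [DecidableEq β]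
    (F : Finset (Finset α)) (H : Finset (Finset β)) : WeaklySat F F H := by
  refine ⟨subset_rfl, [], List.nodup_nil, by simp, fun i => i.elim0⟩

lemma wsat_exists {α β : Type*} [DecidableEq α] [DecidableEq β]
    (F : Finset (Finset α)) (H : Finset (Finset β)) :
    ∃ G, WeaklySat F G H ∧ G.card = wsat F H :=
  Nat.sInf_mem (s := {m | ∃ G, WeaklySat F G H ∧ G.card = m})
    ⟨F.card, F, weaklySat_self F H, rfl⟩

lemma wsat_le {α β : Type*} [DecidableEq α] [DecidableEq β]
    {F G : Finset (Finset α)} {H : Finset (Finset β)} (h : WeaklySat F G H) :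
    wsat F H ≤ G.card :=
  Nat.sInf_le ⟨G, h, rfl⟩

lemma card_tensor_le {n d : ℕ} {G : Finset (Finset (Fin n))}
    (hGc : ∀ e ∈ G, e.card = d) :
    (tensorG G (completeQ d d)).card ≤ d.factorial * G.card := by
  classical
  set lifts : Finset (Fin n) → Finset (Finset (Fin n × Fin d)) := fun e =>
    if h : e.card = d then (Finset.univ : Finset (Equiv.Perm (Fin d))).image
      (fun σ => edgeOf (fun i => (e.orderIsoOfFin h (σ i) : Fin n))) else ∅ with hlifts
  have hsub : tensorG G (completeQ d d) ⊆ G.biUnion lifts := by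
    intro f hf
    obtain ⟨x, hxinj, hxG, rfl⟩ := (mem_tensor_iff hGc).1 hf
    refine Finset.mem_biUnion.2 ⟨Finset.univ.image x, hxG, ?_⟩
    have hc : (Finset.univ.image x).card = d := by
      rw [Finset.card_image_of_injective _ hxinj, card_univ, Fintype.card_fin]
    rw [hlifts]
    simp only [dif_pos hc]
    have hmemx : ∀ i, x i ∈ Finset.univ.image x := fun i =>
      Finset.mem_image.2 ⟨i, Finset.mem_univ i, rfl⟩
    set τ : Fin d → Fin d := fun i =>
      ((Finset.univ.image x).orderIsoOfFin hc).symm ⟨x i, hmemx i⟩ with hτ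
    have hτinj : Function.Injective τ := by
      intro a b hab
      have h1 := congrArg ((Finset.univ.image x).orderIsoOfFin hc) hab
      rw [OrderIso.apply_symm_apply, OrderIso.apply_symm_apply] at h1
      exact hxinj (Subtype.ext_iff.1 h1)
    set σ : Equiv.Perm (Fin d) := Equiv.ofBijective τ
      ⟨hτinj, Finite.surjective_of_injective hτinj⟩ with hσ
    refine Finset.mem_image.2 ⟨σ, Finset.mem_univ σ, ?_⟩
    congr 1
    funext i
    show ((Finset.univ.image x).orderIsoOfFin hc (τ i) : Fin n) = x i
    rw [hτ]
    simp only [OrderIso.apply_symm_apply]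
  calc (tensorG G (completeQ d d)).card ≤ (G.biUnion lifts).card :=
        Finset.card_le_card hsub
    _ ≤ ∑ e ∈ G, (lifts e).card := Finset.card_biUnion_le
    _ ≤ ∑ _e ∈ G, d.factorial := by
        apply Finset.sum_le_sum
        intro e _
        rw [hlifts]
        by_cases h : e.card = d
        · simp only [dif_pos h]
          refine le_trans Finset.card_image_le ?_
          rw [card_univ, Fintype.card_perm, Fintype.card_fin]
        · simp only [dif_neg h]
          exact Nat.zero_le _
    _ = d.factorial * G.card := by rw [Finset.sum_const, smul_eq_mul, mul_comm]

lemma card_Z_le {n d : ℕ} (R : ℕ) :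
    (((multiProd n d d).filter fun g =>
        (g.image Prod.fst).card < d ∧ ∃ v ∈ g, (v.1 : ℕ) < R)).card
      ≤ d ^ 3 * (R ^ 2 * n ^ (d - 2)) := by
  classical
  set Z := ((multiProd n d d).filter fun g =>
    (g.image Prod.fst).card < d ∧ ∃ v ∈ g, (v.1 : ℕ) < R) with hZdef
  rcases Z.eq_empty_or_nonempty with hZe | hZne
  · rw [hZe]; simp
  · obtain ⟨g0, hg0⟩ := hZne
    obtain ⟨hg0P, hg0c, _⟩ := Finset.mem_filter.1 hg0
    have hd : 0 < d := by omega
    obtain ⟨x0, hx0⟩ := mem_multiProd_iff.1 hg0P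
    have hn : 0 < n := (x0 ⟨0, hd⟩).pos
    -- Step 1 : inject Z into bad transversals
    set Xfin : Finset (Fin d → Fin n) := Finset.univ.filter
      (fun x => ¬ Function.Injective x ∧ ∃ i, ((x i : ℕ) < R)) with hXfin
    have hstep1 : Z.card ≤ Xfin.card := by
      apply Finset.card_le_card_of_surjOn edgeOf
      intro g hg
      rw [Finset.mem_coe, hZdef, Finset.mem_filter] at hg
      obtain ⟨hgP, hgc, v, hv, hvlow⟩ := hg
      obtain ⟨x, rfl⟩ := mem_multiProd_iff.1 hgP
      refine ⟨x, ?_, rfl⟩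
      rw [Finset.mem_coe, hXfin, Finset.mem_filter]
      refine ⟨Finset.mem_univ _, ?_, ⟨v.2, ?_⟩⟩
      · intro hinj
        have : ((edgeOf x).image Prod.fst).card = d := by
          rw [imageFst_edgeOf, Finset.card_image_of_injective _ hinj, card_univ,
            Fintype.card_fin]
        omega
      · have := mem_edgeOf.1 hv
        rw [← this]
        exact hvlow
    -- Step 2 : cover bad transversals
    set lows : Finset (Fin n) := Finset.univ.filter (fun v => (v : ℕ) < R) with hlows
    have hlowsR : lows.card ≤ R := by
      refine le_trans (Finset.card_le_card_of_injOn (t := Finset.range R)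
        (fun v => (v : ℕ)) ?_ ?_) (le_of_eq (Finset.card_range R))
      · intro v hv
        rw [Finset.mem_coe, Finset.mem_range]
        exact (Finset.mem_filter.1 (Finset.mem_coe.1 hv)).2
      · intro a _ b _ hab
        exact Fin.ext hab
    set P : Fin d × Fin d × Fin d → Fin d := fun t =>
      if t.1 = t.2.1 ∨ t.1 = t.2.2 then t.2.1 else t.1 with hP
    set Q : Fin d × Fin d × Fin d → Fin d := fun t => t.2.2 with hQ
    set piece : Fin d × Fin d × Fin d → Finset (Fin d → Fin n) := fun t =>
      Fintype.piFinset (fun j => if j = P t ∨ j = Q t then lows else Finset.univ) with hpiece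
    set Y : Finset ((Fin d × Fin d × Fin d) × (Fin d → Fin n)) :=
      (Finset.univ.filter (fun t => P t ≠ Q t)).biUnion
        (fun t => ({t} : Finset _) ×ˢ piece t) with hY
    set Ψ : ((Fin d × Fin d × Fin d) × (Fin d → Fin n)) → (Fin d → Fin n) := fun p =>
      if p.1.1 = p.1.2.1 ∨ p.1.1 = p.1.2.2 then p.2
      else Function.update p.2 p.1.2.2 (p.2 p.1.2.1) with hΨ
    have hstep2 : Xfin.card ≤ Y.card := by
      apply Finset.card_le_card_of_surjOn Ψ
      intro x hx
      rw [Finset.mem_coe, hXfin, Finset.mem_filter] at hx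
      obtain ⟨-, hninj, i, hilow⟩ := hx
      obtain ⟨a, b, hab, hne⟩ := Function.not_injective_iff.1 hninj
      by_cases hcase : i = a ∨ i = b
      · -- the collision pair itself is low
        have hxa : (x a : ℕ) < R := by
          rcases hcase with h | h
          · rw [← h]; exact hilow
          · rw [hab, ← h]; exact hilow
        have hxb : (x b : ℕ) < R := by rw [← hab]; exact hxa
        refine ⟨((a, a, b), x), ?_, ?_⟩
        · rw [Finset.mem_coe, hY]
          refine Finset.mem_biUnion.2 ⟨(a, a, b), ?_, ?_⟩
          · rw [Finset.mem_filter]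
            refine ⟨Finset.mem_univ _, ?_⟩
            rw [hP, hQ]
            simp only [true_or, if_pos]
            exact hne
          · have hg2 : x ∈ piece (a, a, b) := by
              rw [hpiece, Fintype.mem_piFinset]
              intro j
              by_cases hj : j = P (a, a, b) ∨ j = Q (a, a, b)
              · rw [if_pos hj, hlows, Finset.mem_filter]
                refine ⟨Finset.mem_univ _, ?_⟩
                rw [hP, hQ] at hj
                simp only [true_or, if_pos] at hj
                rcases hj with rfl | rfl
                · exact hxa
                · exact hxb
              · rw [if_neg hj]; exact Finset.mem_univ _
            rw [Finset.mem_product]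
            exact ⟨Finset.mem_singleton_self _, hg2⟩
        · show (if a = a ∨ a = b then x
            else Function.update x b (x a)) = x
          rw [if_pos (Or.inl rfl)]
      · -- low coordinate away from collision pair
        push_neg at hcase
        obtain ⟨hia, hib⟩ := hcase
        refine ⟨((i, a, b), Function.update x b (x i)), ?_, ?_⟩
        · rw [Finset.mem_coe, hY]
          refine Finset.mem_biUnion.2 ⟨(i, a, b), ?_, ?_⟩
          · rw [Finset.mem_filter]
            refine ⟨Finset.mem_univ _, ?_⟩
            rw [hP, hQ]
            simp only [hia, hib, or_self, if_neg, not_false_iff]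
            exact hib
          · have hg2 : Function.update x b (x i) ∈ piece (i, a, b) := by
              rw [hpiece, Fintype.mem_piFinset]
              intro j
              have hPt : P (i, a, b) = i := by
                rw [hP]
                exact if_neg (by rintro (h | h); exact hia h; exact hib h)
              have hQt : Q (i, a, b) = b := rfl
              by_cases hj : j = P (i, a, b) ∨ j = Q (i, a, b)
              · rw [if_pos hj, hlows, Finset.mem_filter]
                refine ⟨Finset.mem_univ _, ?_⟩
                rw [hPt, hQt] at hj
                rcases hj with rfl | rfl
                · rw [Function.update_of_ne hib]
                  exact hilow
                · rw [Function.update_self]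
                  exact hilow
              · rw [if_neg hj]; exact Finset.mem_univ _
            rw [Finset.mem_product]
            exact ⟨Finset.mem_singleton_self _, hg2⟩
        · show (if i = a ∨ i = b then Function.update x b (x i)
            else Function.update (Function.update x b (x i)) b ((Function.update x b (x i)) a)) = x
          rw [if_neg (by rintro (h | h); exact hia h; exact hib h)]
          rw [Function.update_of_ne hne]
          funext j
          by_cases hjb : j = b
          · subst hjb
            rw [Function.update_self]
            exact hab
          · rw [Function.update_of_ne hjb, Function.update_of_ne hjb]
    -- Step 3 : count the cover
    have hstep3 : Y.card ≤ d ^ 3 * (R ^ 2 * n ^ (d - 2)) := by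
      rw [hY]
      refine le_trans Finset.card_biUnion_le ?_
      have hbound : ∀ t ∈ Finset.univ.filter (fun t => P t ≠ Q t),
          (({t} : Finset _) ×ˢ piece t).card ≤ R ^ 2 * n ^ (d - 2) := by
        intro t ht
        have hPQ : P t ≠ Q t := (Finset.mem_filter.1 ht).2
        rw [Finset.card_product, Finset.card_singleton, one_mul, hpiece,
          Fintype.card_piFinset]
        have hsubPQ : ({P t, Q t} : Finset (Fin d)) ⊆ Finset.univ :=
          Finset.subset_univ _
        rw [← Finset.prod_sdiff hsubPQ]
        have h1 : ∏ j ∈ Finset.univ \ {P t, Q t},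
            (if j = P t ∨ j = Q t then lows else Finset.univ).card = n ^ (d - 2) := by
          have : ∀ j ∈ Finset.univ \ {P t, Q t},
              (if j = P t ∨ j = Q t then lows else (Finset.univ : Finset (Fin n))).card = n := by
            intro j hj
            rw [Finset.mem_sdiff, Finset.mem_insert, Finset.mem_singleton] at hj
            rw [if_neg (by push_neg; exact ⟨fun h => hj.2 (Or.inl h), fun h => hj.2 (Or.inr h)⟩)]
            rw [card_univ, Fintype.card_fin]
          rw [Finset.prod_congr rfl this, Finset.prod_const]
          congr 1
          rw [Finset.card_sdiff_of_subset hsubPQ, card_univ, Fintype.card_fin,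
            Finset.card_pair hPQ]
        have h2 : ∏ j ∈ ({P t, Q t} : Finset (Fin d)),
            (if j = P t ∨ j = Q t then lows else Finset.univ).card ≤ R ^ 2 := by
          rw [Finset.prod_pair hPQ]
          rw [if_pos (Or.inl rfl), if_pos (Or.inr rfl)]
          rw [pow_two]
          exact Nat.mul_le_mul hlowsR hlowsR
        calc (∏ j ∈ Finset.univ \ {P t, Q t},
              (if j = P t ∨ j = Q t then lows else Finset.univ).card) *
              ∏ j ∈ ({P t, Q t} : Finset (Fin d)),
              (if j = P t ∨ j = Q t then lows else Finset.univ).card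
            = n ^ (d - 2) * ∏ j ∈ ({P t, Q t} : Finset (Fin d)),
              (if j = P t ∨ j = Q t then lows else Finset.univ).card := by rw [h1]
          _ ≤ n ^ (d - 2) * R ^ 2 := Nat.mul_le_mul_left _ h2
          _ = R ^ 2 * n ^ (d - 2) := Nat.mul_comm _ _
      refine le_trans (Finset.sum_le_sum hbound) ?_
      rw [Finset.sum_const, smul_eq_mul]
      apply Nat.mul_le_mul_right
      refine le_trans (Finset.card_filter_le _ _) ?_
      rw [card_univ]
      simp [Fintype.card_prod, Fintype.card_fin, pow_succ]
      ring_nf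
      omega
    omega

end Count

/-- Inequality (5) in the proof of Theorem 3:
`wsat(K^d(n;d), H) ≤ d!·wsat(n,H) + O(n^{d-2})` for `H = K^d_{r_1,…,r_d}`; in particular,
if `G` is weakly `H`-saturated in `K^d_{[n]}`, then the `d`-partite lift `G × K^d_{[d]}`
is weakly `H`-saturated in `K^d_{[n]} × K^d_{[d]}`. -/
theorem wsat_partite_le_factorial_clique (d : ℕ) (r : Fin d → ℕ) (hd : 2 ≤ d)
    (hmono : Monotone r) (hr : ∀ i, 1 ≤ r i) :
    (∃ C : ℝ, ∀ n : ℕ,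
      (wsat (multiProd n d d) (multiSigma d d r) : ℝ) ≤
        (Nat.factorial d : ℝ) * (wsat (completeQ d n) (multiSigma d d r) : ℝ)
          + C * (n : ℝ) ^ (d - 2)) ∧
    ∀ (n : ℕ) (G : Finset (Finset (Fin n))),
      WeaklySat (completeQ d n) G (multiSigma d d r) →
      WeaklySat (tensorG (completeQ d n) (completeQ d d)) (tensorG G (completeQ d d))
        (multiSigma d d r) := by
  classical
  have hd0 : 0 < d := by omega
  constructor
  · refine ⟨((d ^ 3 * (∑ i, r i) ^ 2 : ℕ) : ℝ), ?_⟩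
    intro n
    have key : wsat (multiProd n d d) (multiSigma d d r) ≤
        d.factorial * wsat (completeQ d n) (multiSigma d d r)
          + d ^ 3 * ((∑ i, r i) ^ 2 * n ^ (d - 2)) := by
      obtain ⟨G, hG, hGcard⟩ := wsat_exists (completeQ d n) (multiSigma d d r)
      have h1 := wsat_le (part1 hd0 hr hG)
      have hGc : ∀ e ∈ G, e.card = d := fun e he => mem_completeQ.1 (hG.1 he)
      have h3 := card_Z_le (n := n) (d := d) (∑ i, r i)
      calc wsat (multiProd n d d) (multiSigma d d r)
          ≤ (tensorG G (completeQ d d) ∪ ((multiProd n d d).filter fun g =>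
              (g.image Prod.fst).card < d ∧ ∃ v ∈ g, (v.1 : ℕ) < ∑ i, r i)).card := h1
        _ ≤ (tensorG G (completeQ d d)).card + (((multiProd n d d).filter fun g =>
              (g.image Prod.fst).card < d ∧ ∃ v ∈ g, (v.1 : ℕ) < ∑ i, r i)).card :=
            Finset.card_union_le _ _
        _ ≤ d.factorial * wsat (completeQ d n) (multiSigma d d r)
              + d ^ 3 * ((∑ i, r i) ^ 2 * n ^ (d - 2)) := by
            have h2 := card_tensor_le hGc
            rw [hGcard] at h2
            exact Nat.add_le_add h2 h3
    refine le_trans (Nat.cast_le.2 key) (le_of_eq ?_)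
    push_cast
    ring
  · intro n G hG
    exact part2 hd0 hG
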